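/- If v is the prefix of the Tribonacci word of length (T_k+T_{k-2}−3)/2 for k ≥ 3, then the second occurrence of v in t begins at position T_{k-1} and the third occurrence begins at position T_k. -/
import Mathlib


/-- The Tribonacci morphism σ(0)=01, σ(1)=02, σ(2)=0. -/
def tmor (b : ℕ) : List ℕ := if b = 0 then [0, 1] else if b = 1 then [0, 2] else [0]

/-- The iterates t_k = σ^k(0) as finite words. -/
def tw : ℕ → List ℕ
  | 0 => [0]
  | (k + 1) => (tw k).flatMap tmor

/-- The Tribonacci numbers T₀=1, T₁=2, T₂=4, T_k = T_{k-1}+T_{k-2}+T_{k-3}. -/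
def T : ℕ → ℕ
  | 0 => 1
  | 1 => 2
  | 2 => 4
  | (k + 3) => T (k + 2) + T (k + 1) + T k

/-- The Tribonacci word t = σ^ω(0). -/
def tribWord (i : ℕ) : ℕ := (tw (i + 2)).getD i 0

/-- `p` is an occurrence (starting position) of the prefix of length `L`
of the Tribonacci word. -/
def occursAt (L p : ℕ) : Prop := ∀ i < L, tribWord (p + i) = tribWord i

lemma tmor_len_pos (b : ℕ) : 1 ≤ (tmor b).length := by
  unfold tmor; split <;> [skip; split] <;> simp

lemma tw_succ (k : ℕ) : tw (k+1) = (tw k).flatMap tmor := rfl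

lemma tw_append : ∀ n, tw (n+3) = tw (n+2) ++ tw (n+1) ++ tw n
  | 0 => by decide
  | (n+1) => by
    have ih := tw_append n
    calc tw (n+4) = (tw (n+2) ++ tw (n+1) ++ tw n).flatMap tmor := by
          rw [tw_succ, ih]
      _ = tw (n+3) ++ tw (n+2) ++ tw (n+1) := by
          rw [List.flatMap_append, List.flatMap_append]; rfl

lemma tw_length : ∀ n, (tw n).length = T n
  | 0 => rfl
  | 1 => rfl
  | 2 => rfl
  | (n+3) => by
    rw [tw_append n]
    simp only [List.length_append, tw_length (n+2), tw_length (n+1), tw_length n, T]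

lemma T_pos : ∀ n, 0 < T n
  | 0 => by decide
  | 1 => by decide
  | 2 => by decide
  | (n+3) => by have := T_pos n; simp only [T]; omega

lemma T_ge : ∀ n, n + 1 ≤ T n
  | 0 => by decide
  | 1 => by decide
  | 2 => by decide
  | (n+3) => by
    have h1 := T_ge (n+2)
    have h2 := T_pos (n+1)
    have h3 := T_pos n
    simp only [T]; omega

lemma tw_prefix : ∀ k, tw k <+: tw (k+1)
  | 0 => ⟨[1], rfl⟩
  | (k+1) => by
    obtain ⟨s, hs⟩ := tw_prefix k
    exact ⟨s.flatMap tmor, by rw [tw_succ, tw_succ, ← hs, List.flatMap_append]⟩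

lemma tw_prefix_le {k m : ℕ} (h : k ≤ m) : tw k <+: tw m := by
  induction m with
  | zero => simpa [Nat.le_zero.mp h]
  | succ m ih =>
    rcases Nat.lt_or_ge k (m+1) with h' | h'
    · exact (ih (by omega)).trans (tw_prefix m)
    · have : k = m + 1 := by omega
      simp [this]

lemma getD_tw {i m : ℕ} (h : i < (tw m).length) : (tw m).getD i 0 = tribWord i := by
  have hi : i < (tw (i+2)).length := by rw [tw_length]; have := T_ge (i+2); omega
  unfold tribWord
  rcases le_or_gt m (i+2) with hm | hm
  · obtain ⟨s, hs⟩ := tw_prefix_le hm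
    rw [← hs, List.getD_append _ _ _ _ h]
  · obtain ⟨s, hs⟩ := tw_prefix_le (le_of_lt hm)
    rw [← hs, List.getD_append _ _ _ _ hi]
lemma tmor_mem_le {b x : ℕ} (h : x ∈ tmor b) : x ≤ 2 := by
  unfold tmor at h
  split at h <;> [skip; split at h] <;> simp at h <;> omega

lemma tw_mem_le : ∀ k, ∀ x ∈ tw k, x ≤ 2
  | 0 => by intro x hx; simp [tw] at hx; omega
  | (k+1) => by
    intro x hx
    rw [tw_succ, List.mem_flatMap] at hx
    obtain ⟨a, _, hx⟩ := hx
    exact tmor_mem_le hx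

lemma tribWord_le (i : ℕ) : tribWord i ≤ 2 := by
  unfold tribWord
  rcases lt_or_ge i (tw (i+2)).length with h | h
  · rw [List.getD_eq_getElem _ _ h]; exact tw_mem_le _ _ (List.getElem_mem h)
  · rw [List.getD_eq_default _ _ h]; omega

def ff (q : ℕ) : ℕ := ∑ i ∈ Finset.range q, (tmor (tribWord i)).length

lemma ff_zero : ff 0 = 0 := rfl
lemma ff_succ (q : ℕ) : ff (q+1) = ff q + (tmor (tribWord q)).length :=
  Finset.sum_range_succ _ _

lemma ff_lt (q : ℕ) : ff q < ff (q+1) := by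
  have := tmor_len_pos (tribWord q); rw [ff_succ]; omega

lemma ff_mono : StrictMono ff := strictMono_nat_of_lt_succ ff_lt

lemma flat_take_len : ∀ (q m : ℕ), q ≤ (tw m).length →
    (((tw m).take q).flatMap tmor).length = ff q := by
  intro q
  induction q with
  | zero => intro m _; simp [ff_zero]
  | succ q ih =>
    intro m h
    have hq : q < (tw m).length := by omega
    rw [List.take_succ, List.flatMap_append, List.length_append, ih m (by omega)]
    rw [List.getElem?_eq_getElem hq]
    have : (tw m)[q] = tribWord q := by
      rw [← getD_tw hq, List.getD_eq_getElem _ _ hq]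
    simp [ff_succ, this]
lemma block (q j : ℕ) (hj : j < (tmor (tribWord q)).length) :
    tribWord (ff q + j) = (tmor (tribWord q)).getD j 0 := by
  set m := q + 2 with hm
  have hq : q < (tw m).length := by rw [tw_length]; have := T_ge m; omega
  have h1 : tw (m+1) = ((tw m).take q).flatMap tmor ++
      (tmor (tribWord q) ++ ((tw m).drop (q+1)).flatMap tmor) := by
    rw [tw_succ]
    conv_lhs => rw [← List.take_append_drop q (tw m)]
    rw [List.flatMap_append, List.drop_eq_getElem_cons hq, List.flatMap_cons]
    congr 3
    rw [← getD_tw hq, List.getD_eq_getElem _ _ hq]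
  have hlen : (((tw m).take q).flatMap tmor).length = ff q :=
    flat_take_len q m (le_of_lt hq)
  have hlt : ff q + j < (tw (m+1)).length := by
    rw [h1, List.length_append, List.length_append, hlen]; omega
  rw [← getD_tw hlt, h1, List.getD_append_right _ _ _ _ (by omega : (((tw m).take q).flatMap tmor).length ≤ ff q + j), hlen]
  rw [Nat.add_sub_cancel_left]
  exact List.getD_append _ _ _ _ hj

lemma t_ff (q : ℕ) : tribWord (ff q) = 0 := by
  have h := block q 0 (tmor_len_pos _)
  rw [Nat.add_zero] at h
  rw [h]
  unfold tmor; split <;> [rfl; split] <;> rfl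

lemma tmor_len_le (b : ℕ) : (tmor b).length ≤ 2 := by
  unfold tmor; split <;> [skip; split] <;> simp

lemma ff_T : ∀ n, ff (T n) = T (n+1) := by
  intro n
  have h : T n = (tw n).length := (tw_length n).symm
  have := flat_take_len (T n) n (by omega)
  rw [h, List.take_length] at this
  rw [← h] at this
  rw [← this, ← tw_succ, tw_length]

def dec (b : ℕ) : ℕ := if b = 0 then 1 else if b = 1 then 2 else 0

lemma t_ff1 (q : ℕ) : tribWord (ff q + 1) = dec (tribWord q) := by
  have hb := tribWord_le q
  rcases (by omega : tribWord q = 0 ∨ tribWord q = 1 ∨ tribWord q = 2) with h0 | h0 | h0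
  · rw [block q 1 (by rw [h0]; decide), h0]; decide
  · rw [block q 1 (by rw [h0]; decide), h0]; decide
  · have h2 : tribWord q = 2 := h0
    have hlen : (tmor (tribWord q)).length = 1 := by rw [h2]; rfl
    have : ff (q+1) = ff q + 1 := by rw [ff_succ, hlen]
    rw [← this, t_ff, h2]; rfl
lemma cover (p : ℕ) : ∃ q j, j < (tmor (tribWord q)).length ∧ p = ff q + j := by
  induction p with
  | zero => exact ⟨0, 0, tmor_len_pos _, rfl⟩
  | succ p ih =>
    obtain ⟨q, j, hj, rfl⟩ := ih
    rcases Nat.lt_or_ge (j+1) (tmor (tribWord q)).length with h | h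
    · exact ⟨q, j+1, h, by omega⟩
    · have hlen : (tmor (tribWord q)).length = j + 1 := by omega
      exact ⟨q+1, 0, tmor_len_pos _, by rw [ff_succ, hlen]; omega⟩

lemma one_block {p : ℕ} (hp : tribWord p = 1) : ∃ q, p = ff q + 1 := by
  obtain ⟨q, j, hj, rfl⟩ := cover p
  rw [block q j hj] at hp
  have hb := tribWord_le q
  refine ⟨q, ?_⟩
  have hj1 : j = 1 := by
    rcases (by omega : tribWord q = 0 ∨ tribWord q = 1 ∨ tribWord q = 2) with h0 | h0 | h0 <;>
      rw [h0] at hp hj <;>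
      simp only [tmor, if_true, if_false, List.length_cons, List.length_nil,
        show (0:ℕ) ≠ 1 by decide, show (1:ℕ) ≠ 0 by decide, show (2:ℕ) ≠ 0 by decide,
        show (2:ℕ) ≠ 1 by decide, reduceIte] at hp hj <;>
      rcases (by omega : j = 0 ∨ j = 1) with rfl | rfl <;> simp_all
  omega

lemma ff_add_of_match {L q : ℕ} (h : ∀ i < L, tribWord (q+i) = tribWord i) :
    ∀ j ≤ L, ff (q+j) = ff q + ff j := by
  intro j hj
  induction j with
  | zero => simp [ff_zero]
  | succ j ih =>
    rw [← Nat.add_assoc, ff_succ, ff_succ, ih (by omega), h j (by omega)]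
    omega

lemma cover_lt {L i : ℕ} (hi : i < ff L) :
    ∃ j < L, ∃ jj < (tmor (tribWord j)).length, i = ff j + jj := by
  induction L with
  | zero => simp [ff_zero] at hi
  | succ L ih =>
    rcases Nat.lt_or_ge i (ff L) with h | h
    · obtain ⟨j, hj, jj, hjj, rfl⟩ := ih h
      exact ⟨j, by omega, jj, hjj, rfl⟩
    · refine ⟨L, by omega, i - ff L, ?_, by omega⟩
      rw [ff_succ] at hi; omega

lemma occ_image {L q : ℕ} (h : occursAt L q) : occursAt (ff L + 1) (ff q) := by
  intro i hi
  rcases Nat.lt_or_ge i (ff L) with h' | h'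
  · obtain ⟨j, hj, jj, hjj, rfl⟩ := cover_lt h'
    have hadd : ff (q+j) = ff q + ff j := ff_add_of_match h j (le_of_lt hj)
    have hlet : tribWord (q+j) = tribWord j := h j hj
    have b1 := block (q+j) jj (by rw [hlet]; exact hjj)
    have b2 := block j jj hjj
    rw [hadd, hlet] at b1
    rw [← Nat.add_assoc, b1, b2]
  · have : i = ff L := by omega
    subst this
    rw [← ff_add_of_match h L le_rfl, t_ff, t_ff]

lemma dec_inj {a b : ℕ} (ha : a ≤ 2) (hb : b ≤ 2) (h : dec a = dec b) : a = b := by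
  rcases (by omega : a = 0 ∨ a = 1 ∨ a = 2) with rfl | rfl | rfl <;>
    rcases (by omega : b = 0 ∨ b = 1 ∨ b = 2) with rfl | rfl | rfl <;>
    first | rfl | (exfalso; simp [dec] at h)

lemma occ_preimage {L q : ℕ} (h : occursAt (ff L + 1) (ff q)) : occursAt L q := by
  intro j hj
  induction j using Nat.strong_induction_on with
  | _ j ih =>
  have hmatch : ∀ i < j, tribWord (q+i) = tribWord i := fun i hi => ih i hi (by omega)
  have hadd : ff (q+j) = ff q + ff j := ff_add_of_match hmatch j le_rfl
  have hjL : ff j + 1 ≤ ff L := by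
    have h1 : ff (j+1) ≤ ff L := ff_mono.le_iff_le.mpr (by omega)
    have := ff_lt j
    omega
  have e1 : tribWord (ff q + (ff j + 1)) = tribWord (ff j + 1) := h _ (by omega)
  rw [← Nat.add_assoc, ← hadd, t_ff1, t_ff1] at e1
  exact dec_inj (tribWord_le _) (tribWord_le _) e1
def w2 (b : ℕ) : ℕ := if b = 0 then 4 else if b = 1 then 3 else 2
def gg (n : ℕ) : ℕ := ∑ i ∈ Finset.range n, w2 (tribWord i)

lemma gg_succ (q : ℕ) : gg (q+1) = gg q + w2 (tribWord q) :=
  Finset.sum_range_succ _ _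

lemma ff_add (x n : ℕ) :
    ff (x + n) = ff x + ∑ j ∈ Finset.range n, (tmor (tribWord (x+j))).length := by
  induction n with
  | zero => simp
  | succ n ih => rw [← Nat.add_assoc, ff_succ, ih, Finset.sum_range_succ]; omega

lemma gg_add (x n : ℕ) :
    gg (x + n) = gg x + ∑ j ∈ Finset.range n, w2 (tribWord (x+j)) := by
  induction n with
  | zero => simp
  | succ n ih => rw [← Nat.add_assoc, gg_succ, ih, Finset.sum_range_succ]; omega

lemma blocksum_len (q : ℕ) :
    ∑ j ∈ Finset.range (tmor (tribWord q)).length, (tmor (tribWord (ff q + j))).length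
      = w2 (tribWord q) := by
  have hb := tribWord_le q
  have ht0 := t_ff q
  have ht1 := t_ff1 q
  rcases (by omega : tribWord q = 0 ∨ tribWord q = 1 ∨ tribWord q = 2) with h0 | h0 | h0 <;>
    rw [h0] at ht1 ⊢ <;>
    simp [tmor, dec, w2, Finset.sum_range_succ, ht0, ht1]

lemma blocksum_w2 (q : ℕ) :
    ∑ j ∈ Finset.range (tmor (tribWord q)).length, w2 (tribWord (ff q + j))
      = w2 (tribWord q) + (tmor (tribWord q)).length + 1 := by
  have hb := tribWord_le q
  have ht0 := t_ff q
  have ht1 := t_ff1 q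
  rcases (by omega : tribWord q = 0 ∨ tribWord q = 1 ∨ tribWord q = 2) with h0 | h0 | h0 <;>
    rw [h0] at ht1 ⊢ <;>
    simp [tmor, dec, w2, Finset.sum_range_succ, ht0, ht1]

lemma ff_ff : ∀ L, ff (ff L) = gg L := by
  intro L
  induction L with
  | zero => rfl
  | succ L ih =>
    rw [ff_succ, ff_add, ih, blocksum_len, gg_succ]

lemma gg_ff : ∀ L, gg (ff L) = gg L + ff L + L := by
  intro L
  induction L with
  | zero => rfl
  | succ L ih =>
    rw [ff_succ, gg_add, ih, blocksum_w2, gg_succ]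
    omega

lemma T_odd : ∀ k, (T (k+2) + T k) % 2 = 1
  | 0 => by decide
  | (k+1) => by
    have h := T_odd k
    show (T (k+3) + T (k+1)) % 2 = 1
    rw [show T (k+3) = T (k+2) + T (k+1) + T k from rfl]
    omega

def Lf (n : ℕ) : ℕ := (T (n+3) + T (n+1) - 3) / 2

lemma Tr (n : ℕ) : T (n+3) = T (n+2) + T (n+1) + T n := rfl

lemma inv : ∀ n, 2 * Lf n = T (n+3) + T (n+1) - 3 ∧
    ff (Lf n) = Lf n + T (n+2) - 1 ∧
    gg (Lf n) = Lf n + T (n+2) + T (n+3) - 3 := by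
  intro n
  induction n with
  | zero =>
    have h1 : Lf 0 = 3 := by decide
    have h2 : ff 3 = 6 := by decide
    have h3 : gg 3 = 11 := by decide
    refine ⟨by decide, ?_, ?_⟩ <;> rw [h1] <;> [rw [h2]; rw [h3]] <;> decide
  | succ n ih =>
    obtain ⟨hL2, hff, hgg⟩ := ih
    have hodd : (T (n+4) + T (n+2)) % 2 = 1 := T_odd (n+2)
    have hp1 := T_pos n
    have hp2 := T_pos (n+1)
    have hp3 := T_pos (n+2)
    have hp4 := T_pos (n+3)
    have hr4 : T (n+4) = T (n+3) + T (n+2) + T (n+1) := rfl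
    have hr3 : T (n+3) = T (n+2) + T (n+1) + T n := rfl
    have hL2' : 2 * Lf (n+1) = T (n+4) + T (n+2) - 3 := by
      show 2 * ((T (n+4) + T (n+2) - 3) / 2) = T (n+4) + T (n+2) - 3
      omega
    have hnew : Lf (n+1) = ff (Lf n) + 1 := by omega
    have hffval : ff (Lf (n+1)) = gg (Lf n) + 2 := by
      rw [hnew, ff_succ, ff_ff, t_ff]
      rfl
    have hggval : gg (Lf (n+1)) = gg (Lf n) + ff (Lf n) + Lf n + 4 := by
      rw [hnew, gg_succ, gg_ff, t_ff]
      rw [show w2 0 = 4 from rfl]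
    have e1 : Lf (n+1) + T (n+2+1) - 1 = Lf (n+1) + T (n+3) - 1 := rfl
    refine ⟨hL2', ?_, ?_⟩ <;>
      simp only [show n+1+1 = n+2 from rfl, show n+1+2 = n+3 from rfl,
        show n+1+3 = n+4 from rfl] <;> omega
lemma main : ∀ n, occursAt (Lf n) (T (n+2)) ∧ occursAt (Lf n) (T (n+3)) ∧
    ∀ p ≤ T (n+3), occursAt (Lf n) p → p = 0 ∨ p = T (n+2) ∨ p = T (n+3) := by
  intro n
  induction n with
  | zero =>
    have hL : Lf 0 = 3 := by decide
    have hT2 : T 2 = 4 := rfl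
    have hT3 : T 3 = 7 := rfl
    rw [hL, hT2, hT3]
    refine ⟨?_, ?_, ?_⟩
    · show ∀ i < 3, tribWord (4+i) = tribWord i
      decide
    · show ∀ i < 3, tribWord (7+i) = tribWord i
      decide
    · show ∀ p ≤ 7, (∀ i < 3, tribWord (p+i) = tribWord i) → p = 0 ∨ p = 4 ∨ p = 7
      decide
  | succ n ih =>
    obtain ⟨ih1, ih2, ih3⟩ := ih
    obtain ⟨hL2, hff, hgg⟩ := inv n
    have hL2' : 2 * Lf (n+1) = T (n+4) + T (n+2) - 3 := (inv (n+1)).1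
    have hr4 : T (n+4) = T (n+3) + T (n+2) + T (n+1) := rfl
    have hr3 : T (n+3) = T (n+2) + T (n+1) + T n := rfl
    have hp1 := T_pos n
    have hp2 := T_pos (n+1)
    have hp3 := T_pos (n+2)
    have hg2 := T_ge (n+2)
    have hg4 := T_ge (n+4)
    have hnew : Lf (n+1) = ff (Lf n) + 1 := by omega
    have hA : occursAt (Lf (n+1)) (T (n+3)) := by
      rw [hnew, ← ff_T (n+2)]; exact occ_image ih1
    have hB : occursAt (Lf (n+1)) (T (n+4)) := by
      rw [hnew, ← ff_T (n+3)]; exact occ_image ih2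
    refine ⟨hA, hB, ?_⟩
    show ∀ p ≤ T (n+4), occursAt (Lf (n+1)) p → p = 0 ∨ p = T (n+3) ∨ p = T (n+4)
    intro p hp hocc
    have hΛ2 : 2 ≤ Lf (n+1) := by omega
    have h1 : tribWord (p+1) = 1 :=
      (hocc 1 (by omega)).trans (by decide : tribWord 1 = 1)
    obtain ⟨q, hq⟩ := one_block h1
    have hpq : p = ff q := by omega
    rw [hnew, hpq] at hocc
    have hoccq : occursAt (Lf n) q := occ_preimage hocc
    have hqle : q ≤ T (n+3) := by
      have hle : ff q ≤ ff (T (n+3)) := by rw [ff_T]; show ff q ≤ T (n+4); omega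
      exact ff_mono.le_iff_le.mp hle
    rcases ih3 q hqle hoccq with rfl | rfl | rfl
    · left; rw [hpq, ff_zero]
    · right; left; rw [hpq, ff_T]
    · right; right; rw [hpq, ff_T]


/-- for k ≥ 3, letting v be the prefix of the Tribonacci word of
length (T_k+T_{k-2}−3)/2, the second occurrence of v starts at position
T_{k-1} and the third at position T_k (i.e. T_{k-1} and T_k are occurrences
and the only occurrences up to T_k are 0, T_{k-1}, T_k). -/
theorem trib_prefix_occurrences (k : ℕ) (hk : 3 ≤ k) :
    occursAt ((T k + T (k - 2) - 3) / 2) (T (k - 1)) ∧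
    occursAt ((T k + T (k - 2) - 3) / 2) (T k) ∧
    ∀ p ≤ T k, occursAt ((T k + T (k - 2) - 3) / 2) p →
      p = 0 ∨ p = T (k - 1) ∨ p = T k := by
  obtain ⟨n, rfl⟩ : ∃ n, k = n + 3 := ⟨k - 3, by omega⟩
  have h := main n
  have e2 : n + 3 - 2 = n + 1 := by omega
  have e1 : n + 3 - 1 = n + 2 := by omega
  rw [e1, e2]
  exact ⟨h.1, h.2.1, h.2.2⟩
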